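/- arXiv:1708.09749 — 4 statements merged into one kernel-verified Lean document; each statement's English description precedes it below -/
import Mathlib

section
/- Let G be a graph with an EPG-representation in a grid with h rows such that every grid-edge belongs to at most c vertex-paths. Then the pathwidth of G satisfies pw(G) ≤ c(3h − 1) − 1. -/
/-- Two grid points are adjacent (at distance 1). -/
def adjPt (p q : ℤ × ℤ) : Prop :=
  (p.1 = q.1 ∧ (p.2 - q.2 = 1 ∨ q.2 - p.2 = 1)) ∨
  (p.2 = q.2 ∧ (p.1 - q.1 = 1 ∨ q.1 - p.1 = 1))

/-- A (simple) path in the rectangular integer grid. -/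
structure GridPath where
  len : ℕ
  pts : Fin (len + 1) → ℤ × ℤ
  adj : ∀ i : Fin len, adjPt (pts i.castSucc) (pts i.succ)
  inj : Function.Injective pts

/-- The set of grid-edges used by a grid path. -/
def GridPath.edges (P : GridPath) : Set (Sym2 (ℤ × ℤ)) :=
  {e | ∃ i : Fin P.len, e = s(P.pts i.castSucc, P.pts i.succ)}

/-- The set of grid-points used by a grid path. -/
def GridPath.points (P : GridPath) : Set (ℤ × ℤ) :=
  Set.range P.pts

/-- The grid path lies inside the `w × h` grid. -/
def GridPath.InGrid (P : GridPath) (w h : ℕ) : Prop :=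
  ∀ p ∈ P.points, 1 ≤ p.1 ∧ p.1 ≤ (w : ℤ) ∧ 1 ≤ p.2 ∧ p.2 ≤ (h : ℤ)

/-- An EPG-representation: vertices are adjacent iff their paths share a grid-edge. -/
def IsEPGRep {V : Type*} (G : SimpleGraph V) (rep : V → GridPath) : Prop :=
  ∀ v w : V, G.Adj v w ↔ v ≠ w ∧ ((rep v).edges ∩ (rep w).edges).Nonempty


/-- `l, r` give an interval representation of the graph `H`. -/
def IsIntervalRep {V : Type*} (H : SimpleGraph V) (l r : V → ℝ) : Prop :=
  (∀ v, l v ≤ r v) ∧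
  ∀ v w : V, H.Adj v w ↔
    v ≠ w ∧ (Set.Icc (l v) (r v) ∩ Set.Icc (l w) (r w)).Nonempty

/-- `H` is an interval graph. -/
def IsIntervalGraph {V : Type*} (H : SimpleGraph V) : Prop :=
  ∃ l r : V → ℝ, IsIntervalRep H l r

/-- `pwLE G k` means the pathwidth of `G` is at most `k`: `G` is a subgraph of a
`(k+1)`-colourable interval graph. -/
def pwLE {V : Type*} (G : SimpleGraph V) (k : ℕ) : Prop :=
  ∃ H : SimpleGraph V, G ≤ H ∧ IsIntervalGraph H ∧ H.Colorable (k + 1)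


/-!
Project every path onto the x-axis. Paths sharing a grid-edge share a grid-point, so their
projections intersect and `G` is a subgraph of the resulting interval graph. Colouring an interval
graph greedily from left to right needs no more colours than the largest number of intervals
containing a left endpoint `x`. A path with an edge whose projection contains `x` crosses column
`x`, hence uses one of the `3h - 1` grid-edges incident to that column, and each of these lies on at
most `c` paths. Single-point paths have no edge: they are isolated in `G` and get intervals of their
own.
-/

open Set

theorem Nat.sInf_compl_le_card (s : Finset ℕ) : sInf (↑s : Set ℕ)ᶜ ≤ s.card := by
  obtain ⟨m, hm, hms⟩ := Finset.exists_mem_notMem_of_card_lt_card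
    (s := s) (t := Finset.range (s.card + 1)) (by simp)
  exact (Nat.sInf_le hms).trans (Nat.lt_succ_iff.mp (Finset.mem_range.mp hm))

namespace SimpleGraph

variable {V α : Type*} [Finite V] [LinearOrder α] (H : SimpleGraph V)

-- Colour greedily in increasing order of `f`.
theorem colorable_of_ncard_adj_lt {f : V → α} (hf : ∀ ⦃u v⦄, H.Adj u v → f u ≠ f v) {K : ℕ}
    (hK : ∀ v, {u | H.Adj u v ∧ f u < f v}.ncard < K) : H.Colorable K := by
  classical
  have wf : WellFounded (Function.onFun (· < ·) f) :=
    wellFoundedOn_range.mp (finite_range f).wellFoundedOn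
  let col : V → ℕ := wf.fix fun v col => sInf {m | ∀ u (huv : f u < f v), H.Adj u v → col u huv ≠ m}
  have hcol (v : V) : col v = sInf (col '' {u | H.Adj u v ∧ f u < f v})ᶜ := by
    refine (wf.fix_eq _ v).trans (congrArg sInf ?_)
    ext m
    simp only [mem_ofPred_eq, mem_compl_iff, mem_image, not_exists, not_and, and_imp]
    exact ⟨fun h u hadj hlt => h u hlt hadj, fun h u hlt hadj => h u hadj hlt⟩
  have hfree (v : V) : col v < K ∧ col v ∈ (col '' {u | H.Adj u v ∧ f u < f v})ᶜ := by
    set N := {u | H.Adj u v ∧ f u < f v}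
    have hN : (col '' N).Finite := (toFinite N).image col
    rw [hcol, ← hN.coe_toFinset]
    refine ⟨(Nat.sInf_compl_le_card _).trans_lt ?_, Nat.sInf_mem ?_⟩
    · rw [← ncard_eq_toFinset_card _ hN]
      exact (ncard_image_le (toFinite N)).trans_lt (hK v)
    · exact (Finset.finite_toSet _).infinite_compl.nonempty
  refine ⟨Coloring.mk (fun v => ⟨col v, (hfree v).1⟩) fun {u v} hadj heq => ?_⟩
  have heq : col u = col v := congrArg Fin.val heq
  rcases (hf hadj).lt_or_gt with hlt | hlt
  · exact (hfree v).2 ⟨u, ⟨hadj, hlt⟩, heq⟩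
  · exact (hfree u).2 ⟨v, ⟨hadj.symm, hlt⟩, heq.symm⟩

end SimpleGraph

def intervalGraph {V : Type*} (l r : V → ℝ) : SimpleGraph V where
  Adj v w := v ≠ w ∧ (Icc (l v) (r v) ∩ Icc (l w) (r w)).Nonempty
  symm := ⟨fun _ _ h => ⟨h.1.symm, Set.inter_comm _ _ ▸ h.2⟩⟩
  loopless := ⟨fun _ h => h.1 rfl⟩

theorem isIntervalRep_intervalGraph {V : Type*} {l r : V → ℝ} (h : ∀ v, l v ≤ r v) :
    IsIntervalRep (intervalGraph l r) l r :=
  ⟨h, fun _ _ => Iff.rfl⟩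

-- Colour greedily by left endpoints: the earlier neighbours of `v` all contain `l v`.
theorem IsIntervalRep.colorable {V : Type*} [Finite V] {H : SimpleGraph V} {l r : V → ℝ}
    (hH : IsIntervalRep H l r) {K : ℕ} (hK : ∀ v, {u | l u ≤ l v ∧ l v ≤ r u}.ncard ≤ K) :
    H.Colorable K := by
  obtain ⟨e, he⟩ := exists_injective_nat V
  refine H.colorable_of_ncard_adj_lt (f := fun v => toLex (l v, e v)) ?_ fun v => ?_
  · intro u v hadj huv
    exact ((hH.2 u v).1 hadj).1 (he (Prod.ext_iff.mp (toLex.injective huv)).2)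
  · refine (ncard_lt_ncard ?_).trans_le (hK v)
    refine ssubset_of_subset_not_subset (fun u ⟨hadj, hlt⟩ => ⟨?_, ?_⟩) fun hsub => ?_
    · rcases Prod.Lex.toLex_lt_toLex.mp hlt with h | h
      exacts [h.le, h.1.le]
    · obtain ⟨-, t, htu, htv⟩ := (hH.2 u v).1 hadj
      exact htv.1.trans htu.2
    · exact (hsub ⟨le_rfl, hH.1 v⟩).1.ne rfl

theorem ncard_le_mul_card_of_forall_exists_mem {α β : Type*} [Finite α] {E : α → Set β} {c : ℕ}
    (hc : ∀ b, {a | b ∈ E a}.ncard ≤ c) {S : Set α} (F : Finset β)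
    (hS : ∀ a ∈ S, ∃ b ∈ F, b ∈ E a) : S.ncard ≤ c * F.card := by
  classical
  have := Fintype.ofFinite α
  calc S.ncard ≤ (F.biUnion fun b => {a | b ∈ E a}.toFinset).card := by
        rw [← ncard_coe_finset]
        refine ncard_le_ncard fun a ha => ?_
        obtain ⟨b, hb, hab⟩ := hS a ha
        simpa using ⟨b, hb, hab⟩
    _ ≤ ∑ b ∈ F, {a | b ∈ E a}.toFinset.card := Finset.card_biUnion_le
    _ ≤ ∑ _b ∈ F, c := Finset.sum_le_sum fun b _ => by rw [← ncard_eq_toFinset_card']; exact hc b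
    _ = c * F.card := by rw [Finset.sum_const, smul_eq_mul, mul_comm]

theorem ordConnected_range_of_abs_sub_le_one {n : ℕ} {f : Fin (n + 1) → ℤ}
    (hf : ∀ i : Fin n, |f i.succ - f i.castSucc| ≤ 1) : (range f).OrdConnected := by
  rw [ordConnected_iff_uIcc_subset_left (mem_range_self 0)]
  rintro _ ⟨j, rfl⟩
  induction j using Fin.induction with
  | zero => simp
  | succ j ih =>
    intro t ht
    rcases uIcc_subset_uIcc_union_uIcc ht with ht | ht
    · exact ih ht
    · have hj := abs_le.mp (hf j)
      rw [mem_uIcc] at ht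
      rcases (by omega : t = f j.castSucc ∨ t = f j.succ) with rfl | rfl <;> exact mem_range_self _

theorem adjPt_comm {p q : ℤ × ℤ} : adjPt p q ↔ adjPt q p := by
  unfold adjPt
  omega

theorem abs_fst_sub_le_one_of_adjPt {p q : ℤ × ℤ} (h : adjPt p q) : |q.1 - p.1| ≤ 1 := by
  unfold adjPt at h
  rw [abs_le]
  omega

namespace GridPath

variable (P : GridPath)

def minX : ℤ := Finset.univ.inf' Finset.univ_nonempty fun i => (P.pts i).1

def maxX : ℤ := Finset.univ.sup' Finset.univ_nonempty fun i => (P.pts i).1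

variable {P}

theorem minX_le {p : ℤ × ℤ} (hp : p ∈ P.points) : P.minX ≤ p.1 := by
  obtain ⟨i, rfl⟩ := hp
  exact Finset.inf'_le _ (Finset.mem_univ i)

theorem le_maxX {p : ℤ × ℤ} (hp : p ∈ P.points) : p.1 ≤ P.maxX := by
  obtain ⟨i, rfl⟩ := hp
  exact Finset.le_sup' (fun i => (P.pts i).1) (Finset.mem_univ i)

theorem minX_le_maxX : P.minX ≤ P.maxX :=
  (minX_le ⟨0, rfl⟩).trans (le_maxX ⟨0, rfl⟩)

theorem exists_mem_points_fst_eq {x : ℤ} (hmin : P.minX ≤ x) (hmax : x ≤ P.maxX) :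
    ∃ p ∈ P.points, p.1 = x := by
  have hconn : (range fun i => (P.pts i).1).OrdConnected :=
    ordConnected_range_of_abs_sub_le_one fun i => abs_fst_sub_le_one_of_adjPt (P.adj i)
  obtain ⟨i, -, hi⟩ := Finset.exists_mem_eq_inf' Finset.univ_nonempty fun i => (P.pts i).1
  obtain ⟨j, -, hj⟩ := Finset.exists_mem_eq_sup' Finset.univ_nonempty fun i => (P.pts i).1
  obtain ⟨k, hk⟩ : x ∈ range fun i => (P.pts i).1 :=
    hconn.out (mem_range_self i) (mem_range_self j) ⟨hi ▸ hmin, hj ▸ hmax⟩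
  exact ⟨P.pts k, mem_range_self k, hk⟩

theorem len_ne_zero_of_mem_edges {e : Sym2 (ℤ × ℤ)} (he : e ∈ P.edges) : P.len ≠ 0 := by
  obtain ⟨i, -⟩ := he
  exact Nat.ne_zero_of_lt i.isLt

theorem mem_points_of_mem_edges {e : Sym2 (ℤ × ℤ)} {p : ℤ × ℤ} (he : e ∈ P.edges) (hp : p ∈ e) :
    p ∈ P.points := by
  obtain ⟨i, rfl⟩ := he
  rcases Sym2.mem_iff.mp hp with rfl | rfl
  exacts [⟨_, rfl⟩, ⟨_, rfl⟩]

theorem exists_adjPt_mem_edges (hP : P.len ≠ 0) {p : ℤ × ℤ} (hp : p ∈ P.points) :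
    ∃ q ∈ P.points, adjPt p q ∧ s(p, q) ∈ P.edges := by
  obtain ⟨i, rfl⟩ := hp
  by_cases hi : i.val < P.len
  · have hcast : (⟨i, hi⟩ : Fin P.len).castSucc = i := rfl
    exact ⟨_, ⟨_, rfl⟩, hcast ▸ P.adj ⟨i, hi⟩, ⟨⟨i, hi⟩, by rw [hcast]⟩⟩
  · have hsucc : (⟨i - 1, by omega⟩ : Fin P.len).succ = i := by ext; simp; omega
    refine ⟨_, ⟨_, rfl⟩, adjPt_comm.mp (hsucc ▸ P.adj _), ⟨⟨i - 1, by omega⟩, ?_⟩⟩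
    rw [hsucc, Sym2.eq_swap]

end GridPath

noncomputable def columnEdges (x : ℤ) (h : ℕ) : Finset (Sym2 (ℤ × ℤ)) :=
  (Finset.Icc 1 ((h : ℤ) - 1)).image (fun y => s((x, y), (x, y + 1))) ∪
  (Finset.Icc 1 (h : ℤ)).image (fun y => s((x - 1, y), (x, y))) ∪
  (Finset.Icc 1 (h : ℤ)).image (fun y => s((x, y), (x + 1, y)))

theorem card_columnEdges_le (x : ℤ) (h : ℕ) : (columnEdges x h).card ≤ 3 * h - 1 := by
  rw [columnEdges]
  grw [Finset.card_union_le, Finset.card_union_le, Finset.card_image_le, Finset.card_image_le,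
    Finset.card_image_le]
  simp only [Int.card_Icc]
  omega

theorem mem_columnEdges {x : ℤ} {h : ℕ} {p q : ℤ × ℤ} (hpq : adjPt p q) (hpx : p.1 = x)
    (hp : 1 ≤ p.2 ∧ p.2 ≤ h) (hq : 1 ≤ q.2 ∧ q.2 ≤ h) : s(p, q) ∈ columnEdges x h := by
  obtain ⟨a, b⟩ := p
  obtain ⟨c, d⟩ := q
  simp only [adjPt] at hpx hp hq hpq
  subst hpx
  simp only [columnEdges, Finset.mem_union, Finset.mem_image, Finset.mem_Icc, Sym2.eq_iff, true_and,
    Prod.mk.injEq]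
  rcases hpq with ⟨h1, h2 | h2⟩ | ⟨h1, h2 | h2⟩
  · refine Or.inl (Or.inl ⟨d, ?_, ?_⟩) <;> omega
  · refine Or.inl (Or.inl ⟨b, ?_, ?_⟩) <;> omega
  · refine Or.inl (Or.inr ⟨b, ?_, ?_⟩) <;> omega
  · refine Or.inr ⟨b, ?_, ?_⟩ <;> omega

section Projection

variable {V : Type*} [Fintype V] (rep : V → GridPath)

/-- A single-point path has no grid-edge, so its vertex is isolated in `G`; as arbitrarily many
such paths may share a grid-point, each gets a point of its own left of all other intervals. -/
noncomputable def projLeft (v : V) : ℤ :=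
  if (rep v).len = 0 then (⨅ u, (rep u).minX) - 1 - Fintype.equivFin V v else (rep v).minX

noncomputable def projRight (v : V) : ℤ :=
  if (rep v).len = 0 then projLeft rep v else (rep v).maxX

variable {rep}

theorem projLeft_of_len_ne_zero {v : V} (hv : (rep v).len ≠ 0) :
    projLeft rep v = (rep v).minX :=
  if_neg hv

theorem projRight_of_len_ne_zero {v : V} (hv : (rep v).len ≠ 0) :
    projRight rep v = (rep v).maxX :=
  if_neg hv

theorem projLeft_le_projRight (v : V) : projLeft rep v ≤ projRight rep v := by
  by_cases hv : (rep v).len = 0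
  · simp [projRight, hv]
  · rw [projLeft_of_len_ne_zero hv, projRight_of_len_ne_zero hv]
    exact GridPath.minX_le_maxX

theorem projRight_lt_projLeft {u v : V} (hu : (rep u).len = 0) (hv : (rep v).len ≠ 0) :
    projRight rep u < projLeft rep v := by
  have hinf := ciInf_le (finite_range fun w => (rep w).minX).bddBelow v
  simp only [projRight, projLeft, hu, hv, if_true, if_false]
  omega

theorem projLeft_le_fst_le_projRight {v : V} {p : ℤ × ℤ} (hv : (rep v).len ≠ 0)
    (hp : p ∈ (rep v).points) : projLeft rep v ≤ p.1 ∧ p.1 ≤ projRight rep v := by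
  rw [projLeft_of_len_ne_zero hv, projRight_of_len_ne_zero hv]
  exact ⟨GridPath.minX_le hp, GridPath.le_maxX hp⟩

theorem le_intervalGraph_proj {G : SimpleGraph V} (hrep : IsEPGRep G rep) :
    G ≤ intervalGraph (fun v => (projLeft rep v : ℝ)) (fun v => (projRight rep v : ℝ)) := by
  intro v w hvw
  obtain ⟨hne, e, hev, hew⟩ := (hrep v w).mp hvw
  have hproj {u : V} (heu : e ∈ (rep u).edges) :
      (e.out.1.1 : ℝ) ∈ Icc (projLeft rep u : ℝ) (projRight rep u) := by
    have := projLeft_le_fst_le_projRight (GridPath.len_ne_zero_of_mem_edges heu)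
      (GridPath.mem_points_of_mem_edges heu e.out_fst_mem)
    exact ⟨by exact_mod_cast this.1, by exact_mod_cast this.2⟩
  exact ⟨hne, _, hproj hev, hproj hew⟩

theorem setOf_projLeft_mem_subset_singleton {v : V} (hv : (rep v).len = 0) :
    {u | projLeft rep u ≤ projLeft rep v ∧ projLeft rep v ≤ projRight rep u} ⊆ {v} := by
  rintro u ⟨hle, hge⟩
  by_cases hu : (rep u).len = 0
  · have heq : projLeft rep u = projLeft rep v :=
      le_antisymm hle (by simpa [projRight, hu] using hge)
    simp only [projLeft, hu, hv, if_true] at heq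
    exact (Fintype.equivFin V).injective (Fin.ext (by omega))
  · exact absurd hle ((projLeft_le_projRight v).trans_lt (projRight_lt_projLeft hv hu)).not_ge

theorem exists_mem_columnEdges_of_projLeft_mem {h : ℕ}
    (hrows : ∀ v, ∀ p ∈ (rep v).points, 1 ≤ p.2 ∧ p.2 ≤ (h : ℤ)) {u v : V}
    (hv : (rep v).len ≠ 0)
    (hu : projLeft rep u ≤ projLeft rep v ∧ projLeft rep v ≤ projRight rep u) :
    ∃ e ∈ columnEdges (rep v).minX h, e ∈ (rep u).edges := by
  obtain ⟨hle, hge⟩ := hu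
  have hu : (rep u).len ≠ 0 := fun hu => (projRight_lt_projLeft hu hv).not_ge hge
  rw [projLeft_of_len_ne_zero hu, projLeft_of_len_ne_zero hv] at hle
  rw [projRight_of_len_ne_zero hu, projLeft_of_len_ne_zero hv] at hge
  obtain ⟨p, hp, hpx⟩ := (rep u).exists_mem_points_fst_eq hle hge
  obtain ⟨q, hq, hpq, hedge⟩ := (rep u).exists_adjPt_mem_edges hu hp
  exact ⟨_, mem_columnEdges hpq hpx (hrows u p hp) (hrows u q hq), hedge⟩

end Projection

/-- If `G` has an EPG-representation in a grid with `h` rows in which every grid-edge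
belongs to at most `c` vertex-paths, then `pw(G) ≤ c(3h-1) - 1`. -/
theorem stmt3 {V : Type*} [Fintype V] (G : SimpleGraph V) (c h : ℕ)
    (rep : V → GridPath) (hrep : IsEPGRep G rep)
    (hrows : ∀ v, ∀ p ∈ (rep v).points, 1 ≤ p.2 ∧ p.2 ≤ (h : ℤ))
    (hc : ∀ e : Sym2 (ℤ × ℤ), {v : V | e ∈ (rep v).edges}.ncard ≤ c) :
    pwLE G (c * (3 * h - 1) - 1) := by
  have hH := isIntervalRep_intervalGraph fun v =>
    (Int.cast_le (R := ℝ)).mpr (projLeft_le_projRight (rep := rep) v)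
  refine ⟨_, le_intervalGraph_proj hrep, ⟨_, _, hH⟩, hH.colorable fun v => ?_⟩
  simp only [Int.cast_le]
  by_cases hv : (rep v).len = 0
  · have := ncard_le_ncard (setOf_projLeft_mem_subset_singleton hv)
    rw [ncard_singleton] at this
    omega
  · calc _ ≤ c * (columnEdges (rep v).minX h).card :=
          ncard_le_mul_card_of_forall_exists_mem hc _ fun u hu =>
            exists_mem_columnEdges_of_projLeft_mem hrows hv hu
      _ ≤ c * (3 * h - 1) := Nat.mul_le_mul_left c (card_columnEdges_le _ _)
      _ ≤ _ := by omega
end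

section
/- Let a family of closed intervals I(v) = [ℓ(v), r(v)], v ∈ V, have pairwise distinct endpoints, and suppose the corresponding interval graph is connected. Define a sequence by: a₁ is the vertex minimizing ℓ; given aᵢ, let 𝒜ᵢ = { v : ℓ(aᵢ) < ℓ(v) < r(aᵢ) < r(v) }; if 𝒜ᵢ = ∅ stop, else a_{i+1} = argmax over 𝒜ᵢ of r. Then the resulting sequence a₁,…,a_p is an induced path in the interval graph; i.e., consecutive intervals intersect, and r(aᵢ) < ℓ(a_{i+2}) for all 1 ≤ i ≤ p−2. -/
/-!
Since `a (i + 2)` starts inside `a (i + 1)` and reaches beyond it, it also reaches beyond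
`a i`; were it to start inside `a i`, it would have been a candidate reaching further than
the chosen `a (i + 1)`. Hence `r (a i) < l (a (i + 2))`, and as the left endpoints increase
along the sequence, `a i` is disjoint from every later `a j` with `j ≥ i + 2`.
-/

section IntervalGraph

variable {V : Type*} {l r : V → ℝ} {H : SimpleGraph V} {u v w : V}

lemma adj_of_left_mem_Ioo
    (hH : ∀ v w : V, H.Adj v w ↔
      v ≠ w ∧ (Set.Icc (l v) (r v) ∩ Set.Icc (l w) (r w)).Nonempty)
    (hw : l w < r w) (hvw : l v < l w) (hwv : l w < r v) : H.Adj v w :=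
  (hH v w).2 ⟨ne_of_apply_ne l hvw.ne, l w, ⟨hvw.le, hwv.le⟩, le_rfl, hw.le⟩

lemma not_adj_of_right_lt_left
    (hH : ∀ v w : V, H.Adj v w ↔
      v ≠ w ∧ (Set.Icc (l v) (r v) ∩ Set.Icc (l w) (r w)).Nonempty)
    (h : r v < l w) : ¬ H.Adj v w := by
  rintro hvw
  obtain ⟨-, x, ⟨-, hxv⟩, hwx, -⟩ := (hH v w).1 hvw
  linarith

lemma right_lt_left_of_max_lt_right
    (hmax : ∀ x, l u < l x → l x < r u → r u < r x → r x ≤ r v)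
    (hlw : l u < l w) (hrw : r u < r w) (hvw : r v < r w) (hne : l w ≠ r u) :
    r u < l w := by
  by_contra! hwu
  exact (hmax w hlw (hwu.lt_of_ne hne) hrw).not_gt hvw

end IntervalGraph

theorem stmt6_general {V : Type*} (l r : V → ℝ)
    (hlr : ∀ v, l v < r v)
    (hdist : ∀ v w : V, v ≠ w → l v ≠ l w ∧ r v ≠ r w ∧ l v ≠ r w)
    (H : SimpleGraph V)
    (hH : ∀ v w : V, H.Adj v w ↔
      v ≠ w ∧ (Set.Icc (l v) (r v) ∩ Set.Icc (l w) (r w)).Nonempty)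
    (p : ℕ) (a : ℕ → V)
    (hstep : ∀ i, i + 1 < p →
      (l (a i) < l (a (i + 1)) ∧ l (a (i + 1)) < r (a i) ∧ r (a i) < r (a (i + 1))) ∧
      (∀ v, l (a i) < l v → l v < r (a i) → r (a i) < r v → r v ≤ r (a (i + 1)))) :
    (∀ i, i + 1 < p → H.Adj (a i) (a (i + 1))) ∧
    (∀ i, i + 2 < p → r (a i) < l (a (i + 2))) ∧
    (∀ i j, j < p → i + 2 ≤ j → ¬ H.Adj (a i) (a j)) := by
  have hgap : ∀ i, i + 2 < p → r (a i) < l (a (i + 2)) := by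
    intro i hi
    obtain ⟨⟨hl₀, -, hr₀⟩, hmax⟩ := hstep i (by omega)
    obtain ⟨⟨hl₁, -, hr₁⟩, -⟩ := hstep (i + 1) hi
    have hne : a (i + 2) ≠ a i := ne_of_apply_ne r (hr₀.trans hr₁).ne'
    exact right_lt_left_of_max_lt_right hmax (hl₀.trans hl₁) (hr₀.trans hr₁) hr₁
      (hdist _ _ hne).2.2
  have hmono : MonotoneOn (l ∘ a) (Set.Iio p) :=
    monotoneOn_of_le_add_one Set.ordConnected_Iio fun i _ _ hi => (hstep i hi).1.1.le
  refine ⟨fun i hi => ?_, hgap, fun i j hj hij => not_adj_of_right_lt_left hH ?_⟩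
  · exact adj_of_left_mem_Ioo hH (hlr _) (hstep i hi).1.1 (hstep i hi).1.2.1
  · exact (hgap i (by omega)).trans_le
      (hmono (by simp only [Set.mem_Iio]; omega) hj hij)

/-- The greedy sequence of farthest-reaching intervals forms an induced path in the
interval graph: consecutive members are adjacent, `r(aᵢ) < ℓ(a_(i+2))`, and
non-consecutive members are non-adjacent. -/
theorem stmt6 {V : Type*} [Fintype V] (l r : V → ℝ)
    (hlr : ∀ v, l v < r v)
    (hdist : ∀ v w : V, v ≠ w → l v ≠ l w ∧ r v ≠ r w ∧ l v ≠ r w)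
    (H : SimpleGraph V)
    (hH : ∀ v w : V, H.Adj v w ↔
      v ≠ w ∧ (Set.Icc (l v) (r v) ∩ Set.Icc (l w) (r w)).Nonempty)
    (hconn : H.Connected)
    (p : ℕ) (a : ℕ → V)
    (ha0 : ∀ v, l (a 0) ≤ l v)
    (hstep : ∀ i, i + 1 < p →
      (l (a i) < l (a (i + 1)) ∧ l (a (i + 1)) < r (a i) ∧ r (a i) < r (a (i + 1))) ∧
      (∀ v, l (a i) < l v → l v < r (a i) → r (a i) < r v → r v ≤ r (a (i + 1)))) :
    (∀ i, i + 1 < p → H.Adj (a i) (a (i + 1))) ∧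
    (∀ i, i + 2 < p → r (a i) < l (a (i + 2))) ∧
    (∀ i j, j < p → i + 2 ≤ j → ¬ H.Adj (a i) (a j)) :=
  stmt6_general l r hlr hdist H hH p a hstep
end

section
/- With intervals and the greedy sequence a₁,…,a_p as above (a₁ minimizes ℓ; a_{i+1} maximizes r over 𝒜ᵢ = { v : ℓ(aᵢ) < ℓ(v) < r(aᵢ) < r(v) }; the sequence stops when 𝒜ᵢ = ∅), if the interval graph is connected then a_p attains the maximum right endpoint: r(a_p) = max over v ∈ V of r(v). Consequently the union of the intervals I(a₁),…,I(a_p) covers the whole range [min_v ℓ(v), max_v r(v)]. -/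
/-!
Let `R = r(a_p)` (the chain is `a 0, …, a (p - 1)` in the code). Consecutive members of the
chain overlap and have increasing right endpoints, so the chain covers `[ℓ(a₁), R]`. Hence an
interval `v` with `ℓ(v) < R` starts inside some `I(aᵢ)`; if it reached beyond `R` it would lie
in `𝒜ᵢ`, contradicting either the choice of `a_{i+1}` or the stopping rule. An interval meeting
one that ends by `R` starts at or before `R`, so it ends by `R` too (starting exactly at `R`
makes it `a_p`, as endpoints are distinct), and connectivity spreads `r(v) ≤ R` to every `v`.
-/

lemma SimpleGraph.Connected.mem_of_adj_closed {V : Type*} {G : SimpleGraph V}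
    (hG : G.Connected) {S : Set V} {u : V} (hu : u ∈ S)
    (hS : ∀ x y, G.Adj x y → x ∈ S → y ∈ S) (v : V) : v ∈ S := by
  by_contra hv
  obtain ⟨d, -, hd, hd'⟩ := (hG.preconnected u v).some.exists_boundary_dart S hu hv
  exact hd' (hS _ _ d.adj hd)

lemma Nat.exists_lt_and_not_succ {P : ℕ → Prop} {p : ℕ} (hp : 0 < p) (h0 : P 0) :
    ∃ i < p, P i ∧ (i + 1 < p → ¬ P (i + 1)) := by
  classical
  refine ⟨Nat.findGreatest P (p - 1), by have := Nat.findGreatest_le (P := P) (p - 1); omega,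
    Nat.findGreatest_spec (Nat.zero_le _) h0, fun h => ?_⟩
  exact Nat.findGreatest_is_greatest (Nat.lt_succ_self _) (by omega)

/-- The paper's `v ∈ 𝒜ᵢ` for `u = aᵢ`. -/
def Overhangs {V : Type*} (l r : V → ℝ) (u v : V) : Prop :=
  l u < l v ∧ l v < r u ∧ r u < r v

section GreedyChain

variable {V : Type*} {l r : V → ℝ} {p : ℕ} {a : ℕ → V}

lemma right_le_right_last (hchain : ∀ i, i + 1 < p → Overhangs l r (a i) (a (i + 1)))
    {i : ℕ} (hi : i < p) : r (a i) ≤ r (a (p - 1)) :=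
  monotoneOn_of_le_add_one (f := r ∘ a) Set.ordConnected_Iio
    (fun j _ _ hj => (hchain j hj).2.2.le) hi (show p - 1 < p by omega) (by omega)

lemma exists_covering_index (hchain : ∀ i, i + 1 < p → Overhangs l r (a i) (a (i + 1)))
    (hp : 0 < p) {x : ℝ} (hx0 : l (a 0) ≤ x) (hx : x ≤ r (a (p - 1))) :
    ∃ i < p, l (a i) ≤ x ∧ x ≤ r (a i) ∧ (i + 1 < p → x < l (a (i + 1))) := by
  obtain ⟨i, hi, hli, hnext⟩ := Nat.exists_lt_and_not_succ (P := fun i => l (a i) ≤ x) hp hx0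
  refine ⟨i, hi, hli, ?_, fun h => not_le.mp (hnext h)⟩
  by_cases h : i + 1 < p
  · exact ((not_le.mp (hnext h)).trans (hchain i h).2.1).le
  · obtain rfl : i = p - 1 := by omega
    exact hx

variable (hll : ∀ v w, v ≠ w → l v ≠ l w) (hlr : ∀ v w, v ≠ w → l v ≠ r w)
  (hchain : ∀ i, i + 1 < p → Overhangs l r (a i) (a (i + 1)))
  (hgreedy : ∀ i, i + 1 < p → ∀ v, Overhangs l r (a i) v → r v ≤ r (a (i + 1)))
  (hstop : ∀ v, ¬ Overhangs l r (a (p - 1)) v) (hp : 0 < p) (ha0 : ∀ v, l (a 0) ≤ l v)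
include hll hlr hchain hgreedy hstop hp ha0

lemma right_le_right_last_of_left_lt {v : V} (hv : l v < r (a (p - 1))) :
    r v ≤ r (a (p - 1)) := by
  by_contra! hrv
  obtain ⟨i, hi, hli, hlv, -⟩ := exists_covering_index hchain hp (ha0 v) hv.le
  have hR := right_le_right_last hchain hi
  have hvi : v ≠ a i := by rintro rfl; linarith
  have hover : Overhangs l r (a i) v :=
    ⟨hli.lt_of_ne (hll _ _ hvi).symm, hlv.lt_of_ne (hlr _ _ hvi), hR.trans_lt hrv⟩
  by_cases hnext : i + 1 < p
  · linarith [hgreedy i hnext v hover, right_le_right_last hchain hnext]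
  · obtain rfl : i = p - 1 := by omega
    exact hstop v hover

lemma right_le_right_last_of_connected {G : SimpleGraph V} (hG : G.Connected)
    (hadj : ∀ v w, G.Adj v w → (Set.Icc (l v) (r v) ∩ Set.Icc (l w) (r w)).Nonempty) (v : V) :
    r v ≤ r (a (p - 1)) := by
  refine hG.mem_of_adj_closed (S := {v | r v ≤ r (a (p - 1))}) (le_refl (r (a (p - 1))))
    (fun x y hxy hx => ?_) v
  obtain ⟨z, ⟨-, hzx⟩, hyz, -⟩ := hadj x y hxy
  rcases (hyz.trans (hzx.trans hx)).lt_or_eq with hlt | heq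
  · exact right_le_right_last_of_left_lt hll hlr hchain hgreedy hstop hp ha0 hlt
  · obtain rfl : y = a (p - 1) := by_contra fun hne => hlr _ _ hne heq
    exact le_refl (r (a (p - 1)))

end GreedyChain

theorem stmt7_general {V : Type*} (l r : V → ℝ)
    (hdist : ∀ v w : V, v ≠ w → l v ≠ l w ∧ r v ≠ r w ∧ l v ≠ r w)
    (H : SimpleGraph V)
    (hH : ∀ v w : V, H.Adj v w ↔
      v ≠ w ∧ (Set.Icc (l v) (r v) ∩ Set.Icc (l w) (r w)).Nonempty)
    (hconn : H.Connected)
    (p : ℕ) (a : ℕ → V)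
    (ha0 : ∀ v, l (a 0) ≤ l v)
    (hstep : ∀ i, i + 1 < p →
      (l (a i) < l (a (i + 1)) ∧ l (a (i + 1)) < r (a i) ∧ r (a i) < r (a (i + 1))) ∧
      (∀ v, l (a i) < l v → l v < r (a i) → r (a i) < r v → r v ≤ r (a (i + 1))))
    (hp : 1 ≤ p)
    (hstop : ∀ v, ¬ (l (a (p - 1)) < l v ∧ l v < r (a (p - 1)) ∧ r (a (p - 1)) < r v)) :
    (∀ v, r v ≤ r (a (p - 1))) ∧
    (∀ x : ℝ, l (a 0) ≤ x → x ≤ r (a (p - 1)) →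
      ∃ i < p, l (a i) ≤ x ∧ x ≤ r (a i)) := by
  have hchain : ∀ i, i + 1 < p → Overhangs l r (a i) (a (i + 1)) := fun i hi => (hstep i hi).1
  have hgreedy : ∀ i, i + 1 < p → ∀ v, Overhangs l r (a i) v → r v ≤ r (a (i + 1)) :=
    fun i hi v hv => (hstep i hi).2 v hv.1 hv.2.1 hv.2.2
  refine ⟨right_le_right_last_of_connected (fun v w h => (hdist v w h).1)
    (fun v w h => (hdist v w h).2.2) hchain hgreedy hstop hp ha0 hconn
    (fun v w h => ((hH v w).mp h).2), fun x hx0 hx => ?_⟩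
  obtain ⟨i, hi, hli, hxi, -⟩ := exists_covering_index hchain hp hx0 hx
  exact ⟨i, hi, hli, hxi⟩

/-- If the interval graph is connected, the last member of the greedy sequence of
farthest-reaching intervals attains the maximum right endpoint, and the intervals
of the sequence cover the whole range `[min ℓ, max r]`. -/
theorem stmt7 {V : Type*} [Fintype V] (l r : V → ℝ)
    (hlr : ∀ v, l v < r v)
    (hdist : ∀ v w : V, v ≠ w → l v ≠ l w ∧ r v ≠ r w ∧ l v ≠ r w)
    (H : SimpleGraph V)
    (hH : ∀ v w : V, H.Adj v w ↔
      v ≠ w ∧ (Set.Icc (l v) (r v) ∩ Set.Icc (l w) (r w)).Nonempty)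
    (hconn : H.Connected)
    (p : ℕ) (a : ℕ → V)
    (ha0 : ∀ v, l (a 0) ≤ l v)
    (hstep : ∀ i, i + 1 < p →
      (l (a i) < l (a (i + 1)) ∧ l (a (i + 1)) < r (a i) ∧ r (a i) < r (a (i + 1))) ∧
      (∀ v, l (a i) < l v → l v < r (a i) → r (a i) < r v → r v ≤ r (a (i + 1))))
    (hp : 1 ≤ p)
    (hstop : ∀ v, ¬ (l (a (p - 1)) < l v ∧ l v < r (a (p - 1)) ∧ r (a (p - 1)) < r v)) :
    (∀ v, r v ≤ r (a (p - 1))) ∧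
    (∀ x : ℝ, l (a 0) ≤ x → x ≤ r (a (p - 1)) →
      ∃ i < p, l (a i) ≤ x ∧ x ≤ r (a i)) :=
  stmt7_general l r hdist H hH hconn p a ha0 hstep hp hstop
end

section
/- Let v and w be vertices of a graph G, with a common neighbourhood structure arising from contraction: let G′ be obtained from G by contracting the edge (v,w) to a new vertex x. If G has an EPG-representation in which path(v) and path(w) are closed grid paths (cycles) sharing exactly one grid-edge e, and e belongs to no other vertex-path, then replacing path(v) and path(w) by the closed path (path(v) ∪ path(w)) ∖ {e} yields an EPG-representation of G′ (with closed vertex-paths). -/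
/-- A closed path (closed trail) in the rectangular grid: a cyclic sequence of grid
points with consecutive points adjacent and no repeated grid-edge. -/
structure GridCycle where
  len : ℕ
  pts : ℕ → ℤ × ℤ
  closed : pts len = pts 0
  adj : ∀ i < len, adjPt (pts i) (pts (i + 1))
  edgeInj : ∀ i < len, ∀ j < len,
    s(pts i, pts (i + 1)) = s(pts j, pts (j + 1)) → i = j

/-- The set of grid-edges used by a closed grid path. -/
def GridCycle.edges (C : GridCycle) : Set (Sym2 (ℤ × ℤ)) :=
  {e | ∃ i < C.len, e = s(C.pts i, C.pts (i + 1))}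

/-- An EPG-representation with closed vertex-paths. -/
def IsClosedEPGRep {V : Type*} (G : SimpleGraph V) (rep : V → GridCycle) : Prop :=
  ∀ a b : V, G.Adj a b ↔ a ≠ b ∧ ((rep a).edges ∩ (rep b).edges).Nonempty
/-!
Rotating and, if necessary, reversing the two closed paths, we may assume that both start with
the shared edge `e`, traversed in opposite directions. Then `path(v)` without `e` ends where
`path(w)` without `e` starts, and concatenating them gives a closed path whose edge set is
`(path(v) ∪ path(w)) \ {e}`; it repeats no edge because `e` is the only common edge. Since `e`
lies on no other path, removing it changes no intersection with another path, so adjacencies in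
the contracted graph are exactly the grid-edge intersections of the new representation.
-/

theorem adjPt.symm {p q : ℤ × ℤ} (h : adjPt p q) : adjPt q p := by
  unfold adjPt at h ⊢
  omega

theorem adjPt_irrefl (p : ℤ × ℤ) : ¬ adjPt p p := by
  unfold adjPt
  omega

namespace GridCycle

def edge (C : GridCycle) (i : ℕ) : Sym2 (ℤ × ℤ) := s(C.pts i, C.pts (i + 1))

theorem mem_edges {C : GridCycle} {x : Sym2 (ℤ × ℤ)} :
    x ∈ C.edges ↔ ∃ i < C.len, x = C.edge i := Iff.rfl

theorem edge_mem_edges (C : GridCycle) {i : ℕ} (hi : i < C.len) : C.edge i ∈ C.edges :=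
  ⟨i, hi, rfl⟩

theorem adjPt_of_eq_edge (C : GridCycle) {i : ℕ} (hi : i < C.len) {p q : ℤ × ℤ}
    (h : s(p, q) = C.edge i) : adjPt p q := by
  rcases Sym2.eq_iff.mp h with ⟨rfl, rfl⟩ | ⟨rfl, rfl⟩
  · exact C.adj i hi
  · exact (C.adj i hi).symm

theorem two_le_len (C : GridCycle) (h : 0 < C.len) : 2 ≤ C.len := by
  by_contra hlt
  have h1 : C.len = 1 := by omega
  have h2 := C.adj 0 h
  rw [zero_add, ← h1, C.closed] at h2
  exact adjPt_irrefl _ h2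

theorem pts_mod (C : GridCycle) {k : ℕ} (hk : k ≤ C.len) : C.pts (k % C.len) = C.pts k := by
  rcases hk.lt_or_eq with hk | rfl
  · rw [Nat.mod_eq_of_lt hk]
  · rw [Nat.mod_self, C.closed]

theorem edge_succ_mod (C : GridCycle) {i : ℕ} (hi : i < C.len) :
    s(C.pts (i % C.len + 1), C.pts ((i + 1) % C.len + 1)) = C.edge ((i + 1) % C.len) := by
  rw [Nat.mod_eq_of_lt hi, ← C.pts_mod (show i + 1 ≤ C.len by omega)]
  rfl

def rotate (C : GridCycle) : GridCycle where
  len := C.len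
  pts k := C.pts (k % C.len + 1)
  closed := by simp
  adj i hi := C.adjPt_of_eq_edge (Nat.mod_lt _ (by omega)) (C.edge_succ_mod hi)
  edgeInj i hi j hj h := by
    rw [C.edge_succ_mod hi, C.edge_succ_mod hj] at h
    have := Nat.ModEq.add_right_cancel' 1
      (C.edgeInj _ (Nat.mod_lt _ (by omega)) _ (Nat.mod_lt _ (by omega)) h)
    rwa [Nat.ModEq, Nat.mod_eq_of_lt hi, Nat.mod_eq_of_lt hj] at this

@[simp]
theorem rotate_len (C : GridCycle) : C.rotate.len = C.len := rfl

theorem rotate_edge (C : GridCycle) {i : ℕ} (hi : i < C.len) :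
    C.rotate.edge i = C.edge ((i + 1) % C.len) :=
  C.edge_succ_mod hi

theorem edges_rotate (C : GridCycle) : C.rotate.edges = C.edges := by
  ext x
  simp only [mem_edges, rotate_len]
  constructor
  · rintro ⟨i, hi, rfl⟩
    exact ⟨_, Nat.mod_lt _ (by omega), C.rotate_edge hi⟩
  · rintro ⟨t, ht, rfl⟩
    rcases t with _ | t
    · refine ⟨C.len - 1, by omega, ?_⟩
      rw [C.rotate_edge (by omega), Nat.sub_add_cancel (by omega), Nat.mod_self]
    · refine ⟨t, by omega, ?_⟩
      rw [C.rotate_edge (by omega), Nat.mod_eq_of_lt ht]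

theorem exists_edge_zero_eq (C : GridCycle) {i : ℕ} (hi : i < C.len) :
    ∃ D : GridCycle, D.edges = C.edges ∧ D.edge 0 = C.edge i := by
  induction i generalizing C with
  | zero => exact ⟨C, rfl, rfl⟩
  | succ i ih =>
    obtain ⟨D, hD, hD0⟩ := ih C.rotate (show i < C.len by omega)
    refine ⟨D, hD.trans C.edges_rotate, ?_⟩
    rw [hD0, C.rotate_edge (by omega), Nat.mod_eq_of_lt hi]

theorem edge_len_sub (C : GridCycle) {i : ℕ} (hi : i < C.len) :
    s(C.pts (C.len - i), C.pts (C.len - (i + 1))) = C.edge (C.len - 1 - i) := by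
  rw [show C.len - (i + 1) = C.len - 1 - i by omega, show C.len - i = C.len - 1 - i + 1 by omega]
  exact Sym2.eq_swap

def reverse (C : GridCycle) : GridCycle where
  len := C.len
  pts k := C.pts (C.len - k)
  closed := by simp [C.closed]
  adj i hi := C.adjPt_of_eq_edge (by omega) (C.edge_len_sub hi)
  edgeInj i hi j hj h := by
    rw [C.edge_len_sub hi, C.edge_len_sub hj] at h
    have := C.edgeInj _ (by omega) _ (by omega) h
    omega

@[simp]
theorem reverse_len (C : GridCycle) : C.reverse.len = C.len := rfl

theorem reverse_edge (C : GridCycle) {i : ℕ} (hi : i < C.len) :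
    C.reverse.edge i = C.edge (C.len - 1 - i) :=
  C.edge_len_sub hi

theorem edges_reverse (C : GridCycle) : C.reverse.edges = C.edges := by
  ext x
  simp only [mem_edges, reverse_len]
  constructor
  · rintro ⟨i, hi, rfl⟩
    exact ⟨_, by omega, C.reverse_edge hi⟩
  · rintro ⟨t, ht, rfl⟩
    refine ⟨C.len - 1 - t, show C.len - 1 - t < C.len by omega, ?_⟩
    rw [C.reverse_edge (by omega), show C.len - 1 - (C.len - 1 - t) = t by omega]

theorem len_pos_of_mem_edges {C : GridCycle} {x : Sym2 (ℤ × ℤ)} (hx : x ∈ C.edges) :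
    0 < C.len := by
  obtain ⟨i, hi, -⟩ := hx
  omega

theorem exists_pts_eq {C : GridCycle} {p q : ℤ × ℤ} (h : s(p, q) ∈ C.edges) :
    ∃ D : GridCycle, D.edges = C.edges ∧ D.pts 0 = p ∧ D.pts 1 = q := by
  obtain ⟨i, hi, hpq⟩ := h
  obtain ⟨D, hD, hD0⟩ := C.exists_edge_zero_eq hi
  have hlen : 0 < D.len := len_pos_of_mem_edges (hD ▸ C.edge_mem_edges hi)
  rcases Sym2.eq_iff.mp (hpq.trans hD0.symm) with ⟨hp, hq⟩ | ⟨hp, hq⟩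
  · exact ⟨D, hD, hp.symm, hq.symm⟩
  -- `D` runs through the edge from `q` to `p`: rotating once and reversing turns it round.
  · refine ⟨D.rotate.reverse, D.rotate.edges_reverse.trans (D.edges_rotate.trans hD), ?_, ?_⟩
    · show D.pts ((D.len - 0) % D.len + 1) = p
      rw [Nat.sub_zero, Nat.mod_self, hp]
    · show D.pts ((D.len - 1) % D.len + 1) = q
      rw [Nat.mod_eq_of_lt (by omega), Nat.sub_add_cancel hlen, D.closed, hq]

theorem edge_ne_edge_zero (C : GridCycle) {i : ℕ} (hi : i < C.len) (h0 : i ≠ 0) :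
    C.edge i ≠ C.edge 0 :=
  fun h => h0 (C.edgeInj i hi 0 (by omega) h)

def splicePts (P Q : GridCycle) (k : ℕ) : ℤ × ℤ :=
  if k < P.len then P.pts (k + 1) else Q.pts (k + 2 - P.len)

theorem splicePts_edge (P Q : GridCycle) (h₀ : P.pts 0 = Q.pts 1) (k : ℕ) :
    s(splicePts P Q k, splicePts P Q (k + 1)) =
      if k + 1 < P.len then P.edge (k + 1) else Q.edge (k + 2 - P.len) := by
  unfold splicePts edge
  by_cases hk : k + 1 < P.len
  · rw [if_pos (by omega), if_pos hk, if_pos hk]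
  · rw [if_neg hk, if_neg hk, show k + 1 + 2 - P.len = k + 2 - P.len + 1 by omega]
    by_cases hk' : k < P.len
    · rw [if_pos hk', show k + 1 = P.len by omega, P.closed, h₀,
        show k + 2 - P.len = 1 by omega]
    · rw [if_neg hk']

def splice (P Q : GridCycle) (hP : 0 < P.len) (hQ : 2 ≤ Q.len)
    (h₀ : P.pts 0 = Q.pts 1) (h₁ : P.pts 1 = Q.pts 0)
    (hPQ : P.edges ∩ Q.edges ⊆ {P.edge 0}) : GridCycle where
  len := P.len + Q.len - 2
  pts := splicePts P Q
  closed := by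
    unfold splicePts
    rw [if_neg (by omega), if_pos hP, show P.len + Q.len - 2 + 2 - P.len = Q.len by omega,
      Q.closed, h₁]
  adj i hi := by
    have h := splicePts_edge P Q h₀ i
    split_ifs at h with hi'
    exacts [P.adjPt_of_eq_edge hi' h, Q.adjPt_of_eq_edge (by omega) h]
  edgeInj i hi j hj h := by
    have hcross : ∀ m n, m + 1 < P.len → n < Q.len → P.edge (m + 1) ≠ Q.edge n :=
      fun m n hm hn hmn => P.edge_ne_edge_zero hm (by omega)
        (hPQ ⟨P.edge_mem_edges hm, hmn ▸ Q.edge_mem_edges hn⟩)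
    rw [splicePts_edge P Q h₀, splicePts_edge P Q h₀] at h
    split_ifs at h with hi' hj' hj'
    · have := P.edgeInj _ hi' _ hj' h
      omega
    · exact absurd h (hcross i _ hi' (by omega))
    · exact absurd h.symm (hcross j _ hj' (by omega))
    · have := Q.edgeInj _ (by omega) _ (by omega) h
      omega

theorem splice_edge {P Q : GridCycle} {hP : 0 < P.len} {hQ : 2 ≤ Q.len}
    {h₀ : P.pts 0 = Q.pts 1} {h₁ : P.pts 1 = Q.pts 0}
    {hPQ : P.edges ∩ Q.edges ⊆ {P.edge 0}} (k : ℕ) :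
    (splice P Q hP hQ h₀ h₁ hPQ).edge k =
      if k + 1 < P.len then P.edge (k + 1) else Q.edge (k + 2 - P.len) :=
  splicePts_edge P Q h₀ k

theorem edges_splice (P Q : GridCycle) (hP : 0 < P.len) (hQ : 2 ≤ Q.len)
    (h₀ : P.pts 0 = Q.pts 1) (h₁ : P.pts 1 = Q.pts 0)
    (hPQ : P.edges ∩ Q.edges ⊆ {P.edge 0}) :
    (splice P Q hP hQ h₀ h₁ hPQ).edges = (P.edges ∪ Q.edges) \ {P.edge 0} := by
  have hQ0 : Q.edge 0 = P.edge 0 := by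
    simp only [edge, zero_add, h₀, h₁]
    exact Sym2.eq_swap
  ext x
  constructor
  · rintro ⟨k, hk, rfl⟩
    change k < P.len + Q.len - 2 at hk
    change (splice P Q hP hQ h₀ h₁ hPQ).edge k ∈ _
    rw [splice_edge]
    split_ifs with hk'
    · exact ⟨Or.inl (P.edge_mem_edges hk'), P.edge_ne_edge_zero hk' (by omega)⟩
    · exact ⟨Or.inr (Q.edge_mem_edges (by omega)),
        hQ0 ▸ Q.edge_ne_edge_zero (by omega) (by omega)⟩
  · rintro ⟨⟨t, ht, rfl⟩ | ⟨t, ht, rfl⟩, hne⟩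
    · have ht0 : t ≠ 0 := by rintro rfl; exact hne rfl
      refine ⟨t - 1, show t - 1 < P.len + Q.len - 2 by omega, ?_⟩
      change P.edge t = (splice P Q hP hQ h₀ h₁ hPQ).edge (t - 1)
      rw [splice_edge, if_pos (by omega), Nat.sub_add_cancel (by omega)]
    · have ht0 : t ≠ 0 := by rintro rfl; exact hne hQ0
      refine ⟨t + P.len - 2, show t + P.len - 2 < P.len + Q.len - 2 by omega, ?_⟩
      change Q.edge t = (splice P Q hP hQ h₀ h₁ hPQ).edge (t + P.len - 2)
      rw [splice_edge, if_neg (by omega), show t + P.len - 2 + 2 - P.len = t by omega]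

theorem exists_edges_eq_union_diff (C D : GridCycle) {e : Sym2 (ℤ × ℤ)}
    (h : C.edges ∩ D.edges = {e}) :
    ∃ S : GridCycle, S.edges = (C.edges ∪ D.edges) \ {e} := by
  induction e using Sym2.ind with | _ a b => ?_
  have hab : s(a, b) ∈ C.edges ∩ D.edges := h ▸ rfl
  obtain ⟨P, hP, hPa, hPb⟩ := exists_pts_eq hab.1
  obtain ⟨Q, hQ, hQb, hQa⟩ := exists_pts_eq (Sym2.eq_swap ▸ hab.2 : s(b, a) ∈ D.edges)
  have hP0 : P.edge 0 = s(a, b) := by rw [edge, hPa, zero_add, hPb]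
  have hPQ : P.edges ∩ Q.edges ⊆ {P.edge 0} := by rw [hP, hQ, h, hP0]
  refine ⟨splice P Q (len_pos_of_mem_edges (hP ▸ hab.1))
    (Q.two_le_len (len_pos_of_mem_edges (hQ ▸ hab.2))) (hPa.trans hQa.symm)
    (hPb.trans hQb.symm) hPQ, ?_⟩
  rw [edges_splice, hP, hQ, hP0]

end GridCycle

theorem IsClosedEPGRep.adj_or_adj_iff {V : Type*} {G : SimpleGraph V} {rep : V → GridCycle}
    (hrep : IsClosedEPGRep G rep) {u v w : V} (hv : v ≠ u) (hw : w ≠ u)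
    {e : Sym2 (ℤ × ℤ)} (he : e ∉ (rep u).edges) :
    (G.Adj v u ∨ G.Adj w u) ↔
      ((((rep v).edges ∪ (rep w).edges) \ {e}) ∩ (rep u).edges).Nonempty := by
  rw [hrep, hrep, ← Set.inter_sdiff_right_comm, Set.sdiff_singleton_eq_self (fun h => he h.2),
    Set.union_inter_distrib_right, Set.union_nonempty]
  exact or_congr (and_iff_right hv) (and_iff_right hw)

theorem IsClosedEPGRep.contract {V : Type*} [DecidableEq V] {G : SimpleGraph V}
    {rep : V → GridCycle} (hrep : IsClosedEPGRep G rep) {v w : V} {e : Sym2 (ℤ × ℤ)}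
    (hunique : ∀ u : V, u ≠ v → u ≠ w → e ∉ (rep u).edges)
    {G' : SimpleGraph {u : V // u ≠ w}}
    (hG' : ∀ a b : {u : V // u ≠ w}, G'.Adj a b ↔ a ≠ b ∧
      (G.Adj ↑a ↑b ∨ ((a : V) = v ∧ G.Adj w ↑b) ∨ ((b : V) = v ∧ G.Adj ↑a w)))
    {rep' : {u : V // u ≠ w} → GridCycle}
    (hrep' : ∀ a : {u : V // u ≠ w}, (rep' a).edges =
      if (a : V) = v then ((rep v).edges ∪ (rep w).edges) \ {e} else (rep (a : V)).edges) :
    IsClosedEPGRep G' rep' := by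
  intro a b
  rw [hG', hrep', hrep']
  by_cases hab : a = b
  · simp [hab]
  have hab' : (a : V) ≠ b := Subtype.coe_ne_coe.mpr hab
  simp only [ne_eq, hab, not_false_eq_true, true_and]
  by_cases ha : (a : V) = v <;> by_cases hb : (b : V) = v
  · exact absurd (ha.trans hb.symm) hab'
  · rw [if_pos ha, if_neg hb, ha]
    simp only [true_and, hb, false_and, or_false]
    exact hrep.adj_or_adj_iff (ha ▸ hab') (Ne.symm b.2) (hunique b hb b.2)
  · rw [if_neg ha, if_pos hb, hb, Set.inter_comm, G.adj_comm _ v, G.adj_comm _ w]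
    simp only [ha, false_and, true_and, false_or]
    exact hrep.adj_or_adj_iff (hb ▸ hab'.symm) (Ne.symm a.2) (hunique a ha a.2)
  · simp only [ha, hb, false_and, or_false, if_false]
    exact (hrep a b).trans (and_iff_right hab')

theorem stmt15_general {V : Type*} [DecidableEq V] (G : SimpleGraph V)
    (v w : V)
    (rep : V → GridCycle) (hrep : IsClosedEPGRep G rep)
    (e : Sym2 (ℤ × ℤ))
    (hshare : (rep v).edges ∩ (rep w).edges = {e})
    (hunique : ∀ u : V, u ≠ v → u ≠ w → e ∉ (rep u).edges)
    (G' : SimpleGraph {u : V // u ≠ w})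
    (hG' : ∀ a b : {u : V // u ≠ w}, G'.Adj a b ↔ a ≠ b ∧
      (G.Adj ↑a ↑b ∨ ((a : V) = v ∧ G.Adj w ↑b) ∨ ((b : V) = v ∧ G.Adj ↑a w))) :
    ∃ rep' : {u : V // u ≠ w} → GridCycle,
      (∀ a : {u : V // u ≠ w}, (rep' a).edges =
        if (a : V) = v then ((rep v).edges ∪ (rep w).edges) \ {e}
        else (rep (a : V)).edges) ∧
      IsClosedEPGRep G' rep' := by
  obtain ⟨S, hS⟩ := GridCycle.exists_edges_eq_union_diff (rep v) (rep w) hshare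
  have hrep' : ∀ a : {u : V // u ≠ w}, (if (a : V) = v then S else rep a).edges =
      if (a : V) = v then ((rep v).edges ∪ (rep w).edges) \ {e} else (rep (a : V)).edges := by
    intro a
    split_ifs <;> simp only [hS]
  exact ⟨_, hrep', hrep.contract hunique hG' hrep'⟩

/-- Contracting the edge `(v,w)` in an EPG-representation with closed vertex-paths:
if `path(v)` and `path(w)` share exactly the grid-edge `e`, which belongs to no other
vertex-path, then replacing them by the closed path `(path(v) ∪ path(w)) \ {e}`
yields an EPG-representation (with closed vertex-paths) of the contracted graph. -/
theorem stmt15 {V : Type*} [Fintype V] [DecidableEq V] (G : SimpleGraph V)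
    (v w : V) (hvw : G.Adj v w)
    (rep : V → GridCycle) (hrep : IsClosedEPGRep G rep)
    (e : Sym2 (ℤ × ℤ))
    (hshare : (rep v).edges ∩ (rep w).edges = {e})
    (hunique : ∀ u : V, u ≠ v → u ≠ w → e ∉ (rep u).edges)
    (G' : SimpleGraph {u : V // u ≠ w})
    (hG' : ∀ a b : {u : V // u ≠ w}, G'.Adj a b ↔ a ≠ b ∧
      (G.Adj ↑a ↑b ∨ ((a : V) = v ∧ G.Adj w ↑b) ∨ ((b : V) = v ∧ G.Adj ↑a w))) :
    ∃ rep' : {u : V // u ≠ w} → GridCycle,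
      (∀ a : {u : V // u ≠ w}, (rep' a).edges =
        if (a : V) = v then ((rep v).edges ∪ (rep w).edges) \ {e}
        else (rep (a : V)).edges) ∧
      IsClosedEPGRep G' rep' :=
  stmt15_general G v w rep hrep e hshare hunique G' hG'
end
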